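/- arXiv:1707.03323 — 4 statements merged into one kernel-verified Lean document; each statement's English description precedes it below -/
import Mathlib

section
/- Let x, y ∈ EuclideanSpace ℝ (Fin (n+1)) be points whose last coordinate is positive. Then the image under P of the segment joining x and y equals the segment joining P(x) and P(y); that is, P '' (segment ℝ x y) = segment ℝ (P x) (P y). -/
/-!
`P` is the perspective map `z ↦ z_{n+1}⁻¹ • A z` of the affine map `A` that replaces the last
coordinate by `1`. Such a map sends the convex combination `a • x + b • y` to the convex
combination of `P x` and `P y` with weights proportional to `a x_{n+1}` and `b y_{n+1}`, so it
maps segments into segments. Since `P` is an involution of the half-space `x_{n+1} > 0`,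
applying this to `P x` and `P y` gives the reverse inclusion.
-/

/-- The projective transformation `P(x₁, …, xₙ, x_{n+1}) = (x₁/x_{n+1}, …, xₙ/x_{n+1}, 1/x_{n+1})`
on the open half-space where the last coordinate is positive. -/
noncomputable def projTrans (n : ℕ) (x : EuclideanSpace ℝ (Fin (n + 1))) :
    EuclideanSpace ℝ (Fin (n + 1)) :=
  WithLp.toLp 2 (fun i => if i = Fin.last n then (x (Fin.last n))⁻¹ else x i / x (Fin.last n))

open Set

section Perspective

variable {𝕜 E F : Type*} [Field 𝕜] [LinearOrder 𝕜] [IsStrictOrderedRing 𝕜]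
  [AddCommGroup E] [Module 𝕜 E] [AddCommGroup F] [Module 𝕜 F]

def perspective (A : E →ᵃ[𝕜] F) (φ : E →ᵃ[𝕜] 𝕜) (z : E) : F := (φ z)⁻¹ • A z

theorem perspective_image_segment_subset (A : E →ᵃ[𝕜] F) (φ : E →ᵃ[𝕜] 𝕜) {x y : E}
    (hx : 0 < φ x) (hy : 0 < φ y) :
    perspective A φ '' segment 𝕜 x y ⊆
      segment 𝕜 (perspective A φ x) (perspective A φ y) := by
  rintro _ ⟨_, ⟨a, b, ha, hb, hab, rfl⟩, rfl⟩
  have hφ : φ (a • x + b • y) = a * φ x + b * φ y := Convex.combo_affine_apply hab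
  have hpos : 0 < a * φ x + b * φ y := by
    rcases ha.eq_or_lt with rfl | ha
    · simp_all
    · positivity
  refine ⟨a * φ x / (a * φ x + b * φ y), b * φ y / (a * φ x + b * φ y),
    by positivity, by positivity, by field_simp, ?_⟩
  simp only [perspective, hφ, Convex.combo_affine_apply hab, smul_add, smul_smul]
  congr 2 <;> field_simp

end Perspective

theorem Convex.image_segment_eq_of_leftInvOn {𝕜 E : Type*} [Semiring 𝕜] [PartialOrder 𝕜]
    [AddCommMonoid E] [Module 𝕜 E] {f : E → E} {S : Set E} (hS : Convex 𝕜 S)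
    (hmaps : MapsTo f S S) (hinv : LeftInvOn f f S)
    (hsub : ∀ x ∈ S, ∀ y ∈ S, f '' segment 𝕜 x y ⊆ segment 𝕜 (f x) (f y))
    {x y : E} (hx : x ∈ S) (hy : y ∈ S) :
    f '' segment 𝕜 x y = segment 𝕜 (f x) (f y) := by
  refine (hsub x hx y hy).antisymm fun z hz ↦
    ⟨f z, ?_, hinv (hS.segment_subset (hmaps hx) (hmaps hy) hz)⟩
  have hfz := hsub _ (hmaps hx) _ (hmaps hy) (mem_image_of_mem f hz)
  rwa [hinv hx, hinv hy] at hfz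

section projTrans

variable (n : ℕ)

noncomputable def projTransNumerator :
    EuclideanSpace ℝ (Fin (n + 1)) →ᵃ[ℝ] EuclideanSpace ℝ (Fin (n + 1)) :=
  (LinearMap.id - (EuclideanSpace.projₗ (Fin.last n)).smulRight
      (EuclideanSpace.single (Fin.last n) (1 : ℝ))).toAffineMap +
    AffineMap.const ℝ _ (EuclideanSpace.single (Fin.last n) (1 : ℝ))

theorem projTrans_eq_perspective :
    projTrans n =
      perspective (projTransNumerator n) (EuclideanSpace.projₗ (Fin.last n)).toAffineMap := by
  ext z i
  by_cases h : i = Fin.last n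
  · subst h; simp [projTrans, perspective, projTransNumerator]
  · simp [projTrans, perspective, projTransNumerator, h, div_eq_inv_mul]

theorem projTrans_last (z : EuclideanSpace ℝ (Fin (n + 1))) :
    projTrans n z (Fin.last n) = (z (Fin.last n))⁻¹ := by
  simp [projTrans]

theorem projTrans_projTrans {z : EuclideanSpace ℝ (Fin (n + 1))} (hz : z (Fin.last n) ≠ 0) :
    projTrans n (projTrans n z) = z := by
  ext i
  by_cases h : i = Fin.last n
  · subst h; simp [projTrans]
  · simp only [projTrans, ↓reduceIte, inv_inv, div_inv_eq_mul, ite_mul, h]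
    field_simp

end projTrans

theorem projTrans_image_segment_general (n : ℕ)
    (x y : EuclideanSpace ℝ (Fin (n + 1)))
    (hx : 0 < x (Fin.last n)) (hy : 0 < y (Fin.last n)) :
    projTrans n '' (segment ℝ x y) = segment ℝ (projTrans n x) (projTrans n y) := by
  let S : Set (EuclideanSpace ℝ (Fin (n + 1))) := {z | 0 < z (Fin.last n)}
  have hS : Convex ℝ S := convex_halfSpace_gt (EuclideanSpace.projₗ (Fin.last n)).isLinear 0
  have hmaps : MapsTo (projTrans n) S S := fun z (hz : 0 < z (Fin.last n)) ↦
    show 0 < projTrans n z (Fin.last n) by rw [projTrans_last]; positivity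
  have hinv : LeftInvOn (projTrans n) (projTrans n) S := fun z hz ↦
    projTrans_projTrans n (ne_of_gt hz)
  refine hS.image_segment_eq_of_leftInvOn hmaps hinv (fun x hx y hy ↦ ?_) hx hy
  rw [projTrans_eq_perspective]
  exact perspective_image_segment_subset _ _ hx hy

/-- `P` maps the segment joining `x` and `y` onto the segment joining `P x` and `P y`. -/
theorem projTrans_image_segment (n : ℕ) (hn : 1 ≤ n)
    (x y : EuclideanSpace ℝ (Fin (n + 1)))
    (hx : 0 < x (Fin.last n)) (hy : 0 < y (Fin.last n)) :
    projTrans n '' (segment ℝ x y) = segment ℝ (projTrans n x) (projTrans n y) :=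
  projTrans_image_segment_general n x y hx hy
end

section
/- Let E be a real inner product space, K ⊆ E convex, δ > 0, c ∈ E with Metric.closedBall c δ ⊆ K, and p ∈ E with dist p c = δ. If u is a vector with ‖u‖ = 1 such that ⟪x − p, u⟫ ≤ 0 for all x ∈ K, then u = δ⁻¹ • (p − c). In particular the supporting unit normal of K at p is unique. -/
open RealInnerProductSpace

/-- If a closed ball of radius `δ` contained in a convex set `K` is internally tangent to `K`
at a boundary point `p`, then the supporting unit normal of `K` at `p` is unique, namely
`δ⁻¹ • (p - c)`. -/
theorem support_normal_unique {E : Type*} [NormedAddCommGroup E] [InnerProductSpace ℝ E]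
    (K : Set E) (hK : Convex ℝ K) (δ : ℝ) (hδ : 0 < δ)
    (c : E) (hball : Metric.closedBall c δ ⊆ K)
    (p : E) (hp : dist p c = δ)
    (u : E) (hu : ‖u‖ = 1) (hsupp : ∀ x ∈ K, ⟪x - p, u⟫ ≤ 0) :
    u = δ⁻¹ • (p - c) := by
  have hx : c + δ • u ∈ K := by
    apply hball
    simp [Metric.mem_closedBall, dist_eq_norm, norm_smul, hu, abs_of_pos hδ]
  have h1 := hsupp _ hx
  have h2 : ⟪p - c, u⟫ ≥ δ := by
    have : c + δ • u - p = δ • u - (p - c) := by abel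
    rw [this, inner_sub_left, real_inner_smul_left, real_inner_self_eq_norm_sq, hu] at h1
    nlinarith
  have hpc : ‖p - c‖ = δ := by rwa [← dist_eq_norm]
  have hcs : ⟪p - c, u⟫ ≤ ‖p - c‖ * ‖u‖ := real_inner_le_norm _ _
  have heq : ⟪p - c, u⟫ = ‖p - c‖ * ‖u‖ := by
    rw [hpc, hu]; rw [hpc, hu] at hcs; linarith
  have := (inner_eq_norm_mul_iff_real).mp heq
  rw [hu, hpc, one_smul] at this
  rw [this, smul_smul, inv_mul_cancel₀ hδ.ne', one_smul]
end

section
/- Let γ : ℝ → EuclideanSpace ℝ (Fin 3) be continuous on [0,1] with γ(0) = γ(1) and ‖γ(t)‖ = 1 for all t ∈ [0,1]. If the length of γ, i.e., the total variation eVariationOn γ (Set.Icc 0 1), is strictly less than 2π, then γ lies in an open hemisphere: there exists v with ‖v‖ = 1 such that 0 < ⟪γ(t), v⟫ for all t ∈ [0,1]. -/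
open RealInnerProductSpace Real

/-!
Cut the curve at a point `γ T` halving its length, so that both arcs joining `γ 0` and `γ T` are
shorter than `π`. On the unit sphere the angle between two points is at most the length of any
arc joining them, hence every point `γ t` satisfies `∠(γ 0, γ t) + ∠(γ t, γ T) < π`, which forces
`0 < ⟪γ t, γ 0 + γ T⟫`. The curve thus lies in the open hemisphere centred at the normalisation of
`γ 0 + γ T`.
-/

open Set Filter Topology InnerProductGeometry

theorem Real.mul_cos_le_sin {x : ℝ} (hx₀ : 0 ≤ x) (hx : x ≤ π / 2) : x * cos x ≤ sin x := by
  rcases hx.lt_or_eq with hx | rfl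
  · have hcos : 0 < cos x := cos_pos_of_mem_Ioo ⟨by linarith, hx⟩
    have := le_tan hx₀ hx
    rwa [tan_eq_sin_div_cos, le_div_iff₀ hcos] at this
  · simp

namespace InnerProductGeometry

variable {V : Type*} [NormedAddCommGroup V] [InnerProductSpace ℝ V]

theorem norm_sub_eq_two_mul_sin_angle_div_two {x y : V} (hx : ‖x‖ = 1) (hy : ‖y‖ = 1) :
    ‖x - y‖ = 2 * sin (angle x y / 2) := by
  have hsin : 0 ≤ sin (angle x y / 2) :=
    sin_nonneg_of_nonneg_of_le_pi (by linarith [angle_nonneg x y])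
      (by linarith [angle_le_pi x y, pi_pos])
  refine (sq_eq_sq₀ (norm_nonneg _) (by positivity)).mp ?_
  have hcos := cos_two_mul (angle x y / 2)
  rw [show 2 * (angle x y / 2) = angle x y by ring] at hcos
  have := norm_sub_sq_eq_norm_sq_add_norm_sq_sub_two_mul_norm_mul_norm_mul_cos_angle x y
  rw [hx, hy] at this
  nlinarith [sin_sq_add_cos_sq (angle x y / 2)]

/-- With `θ = angle x y`, this is `cos² (θ / 2) * θ ≤ 2 * sin (θ / 2)`: short chords of the unit
sphere are longer than the arcs they subtend up to a factor `1 - O(‖x - y‖²)`. -/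
theorem one_sub_norm_sub_sq_div_four_mul_angle_le {x y : V} (hx : ‖x‖ = 1) (hy : ‖y‖ = 1) :
    (1 - ‖x - y‖ ^ 2 / 4) * angle x y ≤ ‖x - y‖ := by
  rw [norm_sub_eq_two_mul_sin_angle_div_two hx hy]
  set φ := angle x y / 2 with hφ
  have hφ₀ : 0 ≤ φ := by linarith [angle_nonneg x y]
  have hφπ : φ ≤ π / 2 := by linarith [angle_le_pi x y]
  have hcos₀ : 0 ≤ cos φ := cos_nonneg_of_mem_Icc ⟨by linarith, hφπ⟩
  have hφ_cos := mul_cos_le_sin hφ₀ hφπ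
  rw [show angle x y = 2 * φ by ring]
  nlinarith [sin_sq_add_cos_sq φ, cos_le_one φ, mul_nonneg hφ₀ hcos₀]

theorem angle_le_sum_angle {f : ℕ → V} (hf : f 0 ≠ 0) (n : ℕ) :
    angle (f 0) (f n) ≤ ∑ i ∈ Finset.range n, angle (f i) (f (i + 1)) := by
  induction n with
  | zero => simp [angle_self hf]
  | succ n ih =>
    rw [Finset.sum_range_succ]
    exact (angle_le_angle_add_angle _ (f n) _).trans (by gcongr)

theorem inner_add_pos_of_angle_add_angle_lt_pi {x y z : V} (hx : ‖x‖ = 1) (hy : ‖y‖ = 1)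
    (h : angle x z + angle z y < π) : 0 < ⟪z, x + y⟫ := by
  have hz : z ≠ 0 := by
    rintro rfl
    simp [angle_zero_left, angle_zero_right] at h
  have hcos : -cos (angle z y) < cos (angle z x) := by
    rw [← cos_pi_sub, angle_comm z x]
    exact cos_lt_cos_of_nonneg_of_le_pi (angle_nonneg x z)
      (by linarith [angle_nonneg z y]) (by linarith)
  rw [inner_add_right, ← cos_angle_mul_norm_mul_norm z x, ← cos_angle_mul_norm_mul_norm z y,
    hx, hy]
  nlinarith [norm_pos_iff.mpr hz]

end InnerProductGeometry

theorem LocallyBoundedVariationOn.continuousOn_variationOnFromTo {α E : Type*} [LinearOrder α]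
    [TopologicalSpace α] [OrderTopology α] [PseudoMetricSpace E] {f : α → E} {s : Set α}
    (hf : LocallyBoundedVariationOn f s) (hc : ContinuousOn f s) {a : α} (ha : a ∈ s) :
    ContinuousOn (variationOnFromTo f s a) s := by
  intro b hb
  have hsplit : s \ {b} = s ∩ Iio b ∪ s ∩ Ioi b := by
    ext x
    simp [← and_or_left, lt_or_lt_iff_ne]
  rw [← continuousWithinAt_sdiff_self, hsplit]
  have hcb := (hc b hb).tendsto
  refine ContinuousWithinAt.union ?_ ?_
  · simpa [ContinuousWithinAt] using variationOnFromTo.tendsto_left ha hb hf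
      (hcb.mono_left (nhdsWithin_mono _ inter_subset_left))
  · simpa [ContinuousWithinAt] using variationOnFromTo.tendsto_right ha hb hf
      (hcb.mono_left (nhdsWithin_mono _ inter_subset_left))

theorem exists_variationOnFromTo_left_eq_right {E : Type*} [PseudoMetricSpace E] {f : ℝ → E}
    {a b : ℝ} (hab : a ≤ b) (hf : BoundedVariationOn f (Icc a b))
    (hc : ContinuousOn f (Icc a b)) :
    ∃ c ∈ Icc a b, variationOnFromTo f (Icc a b) a c = variationOnFromTo f (Icc a b) c b := by
  have ha : a ∈ Icc a b := left_mem_Icc.mpr hab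
  have hb : b ∈ Icc a b := right_mem_Icc.mpr hab
  have hmid : variationOnFromTo f (Icc a b) a b / 2 ∈
      Icc (variationOnFromTo f (Icc a b) a a) (variationOnFromTo f (Icc a b) a b) := by
    have := variationOnFromTo.nonneg_of_le f (Icc a b) hab
    rw [variationOnFromTo.self]
    constructor <;> linarith
  obtain ⟨c, hc, hmid⟩ := intermediate_value_Icc hab
    (hf.locallyBoundedVariationOn.continuousOn_variationOnFromTo hc ha) hmid
  refine ⟨c, hc, ?_⟩
  have := variationOnFromTo.add hf.locallyBoundedVariationOn ha hc hb
  linarith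

theorem angle_le_variationOnFromTo {V : Type*} [NormedAddCommGroup V] [InnerProductSpace ℝ V]
    {γ : ℝ → V} {s : Set ℝ} [hs : s.OrdConnected] (hbv : LocallyBoundedVariationOn γ s)
    (hc : ContinuousOn γ s) (hunit : ∀ t ∈ s, ‖γ t‖ = 1) {a b : ℝ} (ha : a ∈ s) (hb : b ∈ s)
    (hab : a ≤ b) :
    angle (γ a) (γ b) ≤ variationOnFromTo γ s a b := by
  have hsub : Icc a b ⊆ s := hs.out ha hb
  rw [variationOnFromTo.eq_of_le γ s hab]
  -- On partitions whose chords are at most `ε`, each angle is at most `(1 - ε²/4)⁻¹` times its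
  -- chord; then let `ε → 0`.
  suffices h : ∀ ε ∈ Ioo (0 : ℝ) 1,
      (1 - ε ^ 2 / 4) * angle (γ a) (γ b) ≤ (eVariationOn γ (s ∩ Icc a b)).toReal by
    have hlim : Tendsto (fun ε : ℝ ↦ (1 - ε ^ 2 / 4) * angle (γ a) (γ b)) (𝓝[>] 0)
        (𝓝 (angle (γ a) (γ b))) := by
      have : Continuous fun ε : ℝ ↦ (1 - ε ^ 2 / 4) * angle (γ a) (γ b) := by fun_prop
      simpa using (this.tendsto 0).mono_left nhdsWithin_le_nhds
    exact le_of_tendsto hlim (eventually_of_mem (Ioo_mem_nhdsGT one_pos) h)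
  rintro ε ⟨hε₀, hε₁⟩
  obtain ⟨δ, hδ, hδε⟩ := Metric.uniformContinuousOn_iff.mp
    (isCompact_Icc.uniformContinuousOn_of_continuous (hc.mono hsub)) ε hε₀
  set u : ℕ → ℝ := fun i ↦ Icc.addNSMul hab (δ / 2) i
  obtain ⟨n, hn⟩ := Icc.addNSMul_eq_right hab (half_pos hδ)
  have hu : Monotone u := fun i j hij ↦ Icc.monotone_addNSMul hab (half_pos hδ).le hij
  have hu_mem (i : ℕ) : u i ∈ Icc a b := (Icc.addNSMul hab (δ / 2) i).2
  have hunit' (i : ℕ) : ‖γ (u i)‖ = 1 := hunit _ (hsub (hu_mem i))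
  have hchord (i : ℕ) : ‖γ (u i) - γ (u (i + 1))‖ ≤ ε := by
    have hstep : |u (i + 1) - u i| ≤ δ / 2 :=
      Icc.abs_sub_addNSMul_le hab (half_pos hδ).le i ⟨hu i.le_succ, le_rfl⟩
    rw [← dist_eq_norm]
    refine (hδε _ (hu_mem i) _ (hu_mem (i + 1)) ?_).le
    rw [Real.dist_eq, abs_sub_comm]
    linarith
  calc (1 - ε ^ 2 / 4) * angle (γ a) (γ b)
      = (1 - ε ^ 2 / 4) * angle (γ (u 0)) (γ (u n)) := by
        simp only [u, Icc.addNSMul_zero, hn n le_rfl]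
    _ ≤ (1 - ε ^ 2 / 4) * ∑ i ∈ Finset.range n, angle (γ (u i)) (γ (u (i + 1))) := by
        gcongr
        · nlinarith
        · exact angle_le_sum_angle (f := fun i ↦ γ (u i))
            (ne_zero_of_norm_ne_zero (by simp [hunit' 0])) n
    _ = ∑ i ∈ Finset.range n, (1 - ε ^ 2 / 4) * angle (γ (u i)) (γ (u (i + 1))) :=
        Finset.mul_sum _ _ _
    _ ≤ ∑ i ∈ Finset.range n, ‖γ (u i) - γ (u (i + 1))‖ := by
        refine Finset.sum_le_sum fun i _ ↦ le_trans ?_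
          (one_sub_norm_sub_sq_div_four_mul_angle_le (hunit' i) (hunit' (i + 1)))
        gcongr
        · exact angle_nonneg _ _
        · exact hchord i
    _ = (∑ i ∈ Finset.range n, edist (γ (u (i + 1))) (γ (u i))).toReal := by
        rw [ENNReal.toReal_sum fun i _ ↦ edist_ne_top _ _]
        simp [edist_dist, dist_eq_norm, norm_sub_rev]
    _ ≤ (eVariationOn γ (s ∩ Icc a b)).toReal :=
        ENNReal.toReal_mono (hbv a b ha hb)
          (eVariationOn.sum_le hu fun i ↦ ⟨hsub (hu_mem i), hu_mem i⟩)

/-- A closed curve on the unit sphere `S² ⊆ ℝ³` of length strictly less than `2π`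
lies in an open hemisphere. -/
theorem short_closed_spherical_curve_in_open_hemisphere
    (γ : ℝ → EuclideanSpace ℝ (Fin 3))
    (hcont : ContinuousOn γ (Set.Icc 0 1)) (hclosed : γ 0 = γ 1)
    (hsphere : ∀ t ∈ Set.Icc (0 : ℝ) 1, ‖γ t‖ = 1)
    (hlen : eVariationOn γ (Set.Icc 0 1) < ENNReal.ofReal (2 * π)) :
    ∃ v : EuclideanSpace ℝ (Fin 3), ‖v‖ = 1 ∧ ∀ t ∈ Set.Icc (0 : ℝ) 1, 0 < ⟪γ t, v⟫ := by
  have hbv : BoundedVariationOn γ (Icc 0 1) := hlen.ne_top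
  have h₀ : (0 : ℝ) ∈ Icc 0 1 := left_mem_Icc.mpr zero_le_one
  have h₁ : (1 : ℝ) ∈ Icc 0 1 := right_mem_Icc.mpr zero_le_one
  have hL : variationOnFromTo γ (Icc 0 1) 0 1 < 2 * π := by
    rw [variationOnFromTo.eq_of_le _ _ zero_le_one, inter_self]
    exact ENNReal.toReal_lt_of_lt_ofReal hlen
  obtain ⟨T, hT, hhalf⟩ := exists_variationOnFromTo_left_eq_right zero_le_one hbv hcont
  have hvar_add {a b c : ℝ} (ha : a ∈ Icc (0 : ℝ) 1) (hb : b ∈ Icc (0 : ℝ) 1)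
      (hc : c ∈ Icc (0 : ℝ) 1) :=
    variationOnFromTo.add hbv.locallyBoundedVariationOn ha hb hc
  have hangle {a b : ℝ} (ha : a ∈ Icc (0 : ℝ) 1) (hb : b ∈ Icc (0 : ℝ) 1) (hab : a ≤ b) :
      angle (γ a) (γ b) ≤ variationOnFromTo γ (Icc 0 1) a b :=
    angle_le_variationOnFromTo hbv.locallyBoundedVariationOn hcont hsphere ha hb hab
  have hpos (t : ℝ) (ht : t ∈ Icc (0 : ℝ) 1) : 0 < ⟪γ t, γ 0 + γ T⟫ := by
    refine inner_add_pos_of_angle_add_angle_lt_pi (hsphere 0 h₀) (hsphere T hT) ?_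
    rcases le_total t T with htT | hTt
    · linarith [hangle h₀ ht ht.1, hangle ht hT htT, hvar_add h₀ ht hT, hvar_add h₀ hT h₁]
    · rw [angle_comm, add_comm, angle_comm, hclosed]
      linarith [hangle hT ht hTt, hangle ht h₁ ht.2, hvar_add hT ht h₁, hvar_add h₀ hT h₁]
  have hne : γ 0 + γ T ≠ 0 := fun h ↦ by simpa [h] using hpos 0 h₀
  refine ⟨NormedSpace.normalize (γ 0 + γ T), NormedSpace.norm_normalize_eq_one_iff.mpr hne,
    fun t ht ↦ ?_⟩
  rw [NormedSpace.normalize, real_inner_smul_right]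
  exact mul_pos (inv_pos.mpr (norm_pos_iff.mpr hne)) (hpos t ht)
end

section
/- Let n ≥ 1, let w ∈ EuclideanSpace ℝ (Fin (n+1)) be a unit vector, and let A ⊆ EuclideanSpace ℝ (Fin (n+1)) be a nonempty compact set contained in the closed half-space {x : 0 ≤ ⟪x, w⟫}. Suppose there exists q ∈ A with 0 < ⟪q, w⟫. Then there exist a point z and a point q' ∈ A with 0 < ⟪q', w⟫ such that A is contained in the closed ball centered at z of radius dist z q', i.e., dist z x ≤ dist z q' for all x ∈ A. -/
open RealInnerProductSpace

/-- For a nonempty compact set `A` lying in the closed half-space `{x : 0 ≤ ⟪x, w⟫}` but not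
entirely in the bounding hyperplane, there is an enclosing sphere touching `A` at a point `q'`
off the hyperplane. -/
theorem enclosing_sphere_touches_off_hyperplane (n : ℕ) (hn : 1 ≤ n)
    (w : EuclideanSpace ℝ (Fin (n + 1))) (hw : ‖w‖ = 1)
    (A : Set (EuclideanSpace ℝ (Fin (n + 1))))
    (hne : A.Nonempty) (hcomp : IsCompact A)
    (hhalf : A ⊆ {x : EuclideanSpace ℝ (Fin (n + 1)) | 0 ≤ ⟪x, w⟫})
    (hq : ∃ q ∈ A, 0 < ⟪q, w⟫) :
    ∃ z : EuclideanSpace ℝ (Fin (n + 1)), ∃ q' ∈ A,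
      0 < ⟪q', w⟫ ∧ ∀ x ∈ A, dist z x ≤ dist z q' := by
  obtain ⟨q, hqA, hqw⟩ := hq
  obtain ⟨r, hr⟩ := hcomp.isBounded.subset_closedBall 0
  have hr0 : 0 ≤ r := by
    obtain ⟨a, ha⟩ := hne
    have := hr ha
    simp only [Metric.mem_closedBall, dist_zero_right] at this
    exact le_trans (norm_nonneg a) this
  set t : ℝ := (r ^ 2 + 1) / (2 * ⟪q, w⟫) with ht
  have ht0 : 0 < t := div_pos (by positivity) (by positivity)
  set z : EuclideanSpace ℝ (Fin (n + 1)) := -(t • w) with hz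
  -- squared distance formula
  have key : ∀ x : EuclideanSpace ℝ (Fin (n + 1)),
      dist z x ^ 2 = ‖x‖ ^ 2 + 2 * t * ⟪x, w⟫ + t ^ 2 := by
    intro x
    have : dist z x = ‖x + t • w‖ := by
      rw [dist_eq_norm', hz, sub_neg_eq_add]
    rw [this, norm_add_sq_real, inner_smul_right, norm_smul, hw]
    simp [abs_of_pos ht0]
    ring
  -- farthest point
  obtain ⟨q', hq'A, hmax⟩ := hcomp.exists_isMaxOn hne
    (Continuous.continuousOn (continuous_const.dist continuous_id))
  refine ⟨z, q', hq'A, ?_, fun x hx => hmax hx⟩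
  have hq'w : 0 ≤ ⟪q', w⟫ := hhalf hq'A
  rcases hq'w.lt_or_eq with h | h
  · exact h
  -- derive contradiction: q is strictly farther than q'
  exfalso
  have hdle : dist z q ≤ dist z q' := hmax hqA
  have hq'sq : dist z q' ^ 2 = ‖q'‖ ^ 2 + t ^ 2 := by
    rw [key, ← h]; ring
  have hqsq : dist z q ^ 2 = ‖q‖ ^ 2 + 2 * t * ⟪q, w⟫ + t ^ 2 := key q
  have h2t : 2 * t * ⟪q, w⟫ = r ^ 2 + 1 := by
    have hne' : (2 : ℝ) * ⟪q, w⟫ ≠ 0 := by positivity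
    rw [ht, mul_comm (2 : ℝ) _, mul_assoc, div_mul_cancel₀ _ hne']
  have hq'r : ‖q'‖ ≤ r := by
    have := hr hq'A
    simpa [dist_zero_right] using this
  have hsq : dist z q ^ 2 ≤ dist z q' ^ 2 :=
    pow_le_pow_left₀ dist_nonneg hdle 2
  have : ‖q‖ ^ 2 + (r ^ 2 + 1) + t ^ 2 ≤ ‖q'‖ ^ 2 + t ^ 2 := by
    rw [← h2t, ← hqsq, ← hq'sq]; exact hsq
  nlinarith [sq_nonneg ‖q‖, hq'r, norm_nonneg q', norm_nonneg q, hr0]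
end
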